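/- Let (X, d) be a compact metric space and n ≥ 1. For all μ, ν, τ ∈ I(X) and every λ ∈ [−∞, 0], one has d̂_n(μ, (λ⊙ν) ⊕ τ) ≤ max(d̂_n(μ, ν), d̂_n(μ, τ)), where (λ⊙ν) ⊕ τ is the idempotent measure φ ↦ max(λ + ν(φ), τ(φ)) (computed in the extended reals with −∞ + r = −∞). Consequently, every open ball with respect to d̂_n in I(X) is max-plus convex. -/

import Mathlib

/-- An idempotent (Maslov) probability measure on a topological space `X` is a functional
`μ : C(X, ℝ) → ℝ` that is normalized on constants, shifts under addition of constants, and
turns pointwise maxima into maxima. -/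
def IsIdemMeasure {X : Type*} [TopologicalSpace X] (μ : C(X, ℝ) → ℝ) : Prop :=
  (∀ c : ℝ, μ (ContinuousMap.const X c) = c) ∧
  (∀ (c : ℝ) (φ : C(X, ℝ)), μ (ContinuousMap.const X c + φ) = c + μ φ) ∧
  (∀ φ ψ : C(X, ℝ), μ (φ ⊔ ψ) = max (μ φ) (μ ψ))

/-- The space `I(X)` of idempotent probability measures on `X`; as a subtype of the product
`(C(X, ℝ) → ℝ)` it automatically carries the weak* (pointwise convergence) topology. -/
abbrev IdemMeasure (X : Type*) [TopologicalSpace X] :=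
  {μ : C(X, ℝ) → ℝ // IsIdemMeasure μ}

/-- `n-LIP(X, d)`: the continuous functions that are Lipschitz with constant `n`. -/
def nLip (X : Type*) [MetricSpace X] (n : ℕ) : Set C(X, ℝ) :=
  {φ | ∀ x y : X, |φ x - φ y| ≤ (n : ℝ) * dist x y}

/-- The pseudometric `d̂ₙ(μ, ν) = sup { |μ(φ) − ν(φ)| : φ ∈ n-LIP(X, d) }`. -/
noncomputable def dHat {X : Type*} [MetricSpace X] (n : ℕ) (μ ν : C(X, ℝ) → ℝ) : ℝ :=
  sSup {r : ℝ | ∃ φ ∈ nLip X n, r = |μ φ - ν φ|}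

/-- The max-plus combination `α⊙μ ⊕ β⊙ν`: the functional
`φ ↦ max(α + μ(φ), β + ν(φ))`, computed in the extended reals `ℝ ∪ {−∞}` (with the
convention `−∞ + r = −∞`) and read off as a real number (which it is when `max(α, β) = 0`). -/
noncomputable def maxPlusComb {X : Type*} [TopologicalSpace X] (α β : EReal)
    (μ ν : C(X, ℝ) → ℝ) : C(X, ℝ) → ℝ :=
  fun φ => ((α + (μ φ : EReal)) ⊔ (β + (ν φ : EReal))).toReal

/-!
`(λ⊙ν) ⊕ τ` is squeezed between `τ` and `max ν τ` on every test function `φ`, so its value at `φ`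
lies within `max(|μ φ - ν φ|, |μ φ - τ φ|)` of `μ φ`; taking the supremum over `n`-Lipschitz `φ`
gives the inequality. A max-plus combination with `max(α, β) = 0` has one coefficient equal to `0`,
so after possibly swapping the two measures it is of the form `(λ⊙ν) ⊕ τ`, which gives convexity of
the balls.
-/

open ContinuousMap

namespace IsIdemMeasure

variable {X : Type*} [TopologicalSpace X] {μ : C(X, ℝ) → ℝ}

theorem nonempty (hμ : IsIdemMeasure μ) : Nonempty X := by
  by_contra hX
  rw [not_nonempty_iff] at hX
  have h0 := hμ.1 0
  rw [Subsingleton.elim (const X (0 : ℝ)) (const X 1), hμ.1 1] at h0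
  exact one_ne_zero h0

theorem monotone (hμ : IsIdemMeasure μ) : Monotone μ := fun φ ψ hle => by
  simpa [sup_eq_right.2 hle] using (hμ.2.2 φ ψ).ge

theorem exists_le_apply_le [CompactSpace X] (hμ : IsIdemMeasure μ) (φ : C(X, ℝ)) :
    ∃ a b : X, φ a ≤ μ φ ∧ μ φ ≤ φ b := by
  have := hμ.nonempty
  obtain ⟨b, -, hb⟩ := isCompact_univ.exists_isMaxOn Set.univ_nonempty φ.continuous.continuousOn
  obtain ⟨a, -, ha⟩ := isCompact_univ.exists_isMinOn Set.univ_nonempty φ.continuous.continuousOn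
  refine ⟨a, b, ?_, ?_⟩
  · simpa [hμ.1] using hμ.monotone (show const X (φ a) ≤ φ from fun x => ha (Set.mem_univ x))
  · simpa [hμ.1] using hμ.monotone (show φ ≤ const X (φ b) from fun x => hb (Set.mem_univ x))

end IsIdemMeasure

section dHat

variable {X : Type*} [MetricSpace X] {n : ℕ} {μ ν : C(X, ℝ) → ℝ}

theorem abs_sub_le_mul_diam [CompactSpace X] (hμ : IsIdemMeasure μ) (hν : IsIdemMeasure ν)
    {φ : C(X, ℝ)} (hφ : φ ∈ nLip X n) :
    |μ φ - ν φ| ≤ n * Metric.diam (Set.univ : Set X) := by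
  obtain ⟨a, b, ha, hb⟩ := hμ.exists_le_apply_le φ
  obtain ⟨a', b', ha', hb'⟩ := hν.exists_le_apply_le φ
  have hosc : ∀ x y : X, φ x - φ y ≤ n * Metric.diam (Set.univ : Set X) := fun x y =>
    (le_abs_self _).trans <| (hφ x y).trans <| mul_le_mul_of_nonneg_left
      (Metric.dist_le_diam_of_mem isCompact_univ.isBounded trivial trivial) n.cast_nonneg
  rw [abs_sub_le_iff]
  constructor <;> linarith [hosc b a', hosc b' a]

theorem dHat_bddAbove [CompactSpace X] (hμ : IsIdemMeasure μ) (hν : IsIdemMeasure ν) :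
    BddAbove {r : ℝ | ∃ φ ∈ nLip X n, r = |μ φ - ν φ|} := by
  refine ⟨n * Metric.diam (Set.univ : Set X), ?_⟩
  rintro r ⟨φ, hφ, rfl⟩
  exact abs_sub_le_mul_diam hμ hν hφ

theorem const_mem_nLip (c : ℝ) : const X c ∈ nLip X n := fun x y => by
  simpa using mul_nonneg n.cast_nonneg dist_nonneg

theorem abs_sub_le_dHat [CompactSpace X] (hμ : IsIdemMeasure μ) (hν : IsIdemMeasure ν)
    {φ : C(X, ℝ)} (hφ : φ ∈ nLip X n) : |μ φ - ν φ| ≤ dHat n μ ν :=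
  le_csSup (dHat_bddAbove hμ hν) ⟨φ, hφ, rfl⟩

theorem dHat_nonneg [CompactSpace X] (hμ : IsIdemMeasure μ) (hν : IsIdemMeasure ν) :
    0 ≤ dHat n μ ν :=
  (abs_nonneg _).trans (abs_sub_le_dHat hμ hν (const_mem_nLip 0))

end dHat

section maxPlusComb

variable {X : Type*} [TopologicalSpace X]

theorem maxPlusComb_comm (α β : EReal) (ν τ : C(X, ℝ) → ℝ) :
    maxPlusComb α β ν τ = maxPlusComb β α τ ν := by
  funext φ
  simp only [maxPlusComb, sup_comm]

variable (ν τ : C(X, ℝ) → ℝ) (φ : C(X, ℝ))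

theorem maxPlusComb_bot_zero : maxPlusComb ⊥ 0 ν τ φ = τ φ := by
  simp [maxPlusComb]

theorem maxPlusComb_coe_zero (l : ℝ) : maxPlusComb l 0 ν τ φ = max (l + ν φ) (τ φ) := by
  simp only [maxPlusComb, zero_add, ← EReal.coe_add, ← EReal.coe_strictMono.monotone.map_max,
    EReal.toReal_coe]

theorem maxPlusComb_zero_mem_Icc {lam : EReal} (hlam : lam ≤ 0) :
    maxPlusComb lam 0 ν τ φ ∈ Set.Icc (τ φ) (max (ν φ) (τ φ)) := by
  induction lam using EReal.rec with
  | bot => simp [maxPlusComb_bot_zero]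
  | coe l =>
    rw [maxPlusComb_coe_zero]
    have : l ≤ 0 := mod_cast hlam
    exact ⟨le_max_right _ _, max_le_max_right _ (by linarith)⟩
  | top => exact absurd hlam (by simp)

end maxPlusComb

theorem dHat_maxPlusComb_zero_le {X : Type*} [MetricSpace X] [CompactSpace X] {n : ℕ}
    {μ ν τ : C(X, ℝ) → ℝ} (hμ : IsIdemMeasure μ) (hν : IsIdemMeasure ν) (hτ : IsIdemMeasure τ)
    {lam : EReal} (hlam : lam ≤ 0) :
    dHat n μ (maxPlusComb lam 0 ν τ) ≤ max (dHat n μ ν) (dHat n μ τ) := by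
  refine Real.sSup_le ?_ (le_max_of_le_left (dHat_nonneg hμ hν))
  rintro r ⟨φ, hφ, rfl⟩
  obtain ⟨hlo, hhi⟩ := maxPlusComb_zero_mem_Icc ν τ φ hlam
  obtain ⟨hν₁, hν₂⟩ := abs_le.1 (abs_sub_le_dHat (n := n) hμ hν hφ)
  obtain ⟨hτ₁, hτ₂⟩ := abs_le.1 (abs_sub_le_dHat (n := n) hμ hτ hφ)
  rw [abs_sub_le_iff]
  constructor
  · exact le_max_of_le_right (by linarith)
  · rcases le_max_iff.1 hhi with h | h
    · exact le_max_of_le_left (by linarith)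
    · exact le_max_of_le_right (by linarith)

theorem statement10_general {X : Type*} [MetricSpace X] [CompactSpace X] (n : ℕ)
    (μ ν τ : C(X, ℝ) → ℝ) (hμ : IsIdemMeasure μ) (hν : IsIdemMeasure ν)
    (hτ : IsIdemMeasure τ) :
    (∀ lam : EReal, lam ≤ 0 →
      dHat n μ (maxPlusComb lam 0 ν τ) ≤ max (dHat n μ ν) (dHat n μ τ)) ∧
    (∀ ε : ℝ, 0 < ε → dHat n μ ν < ε → dHat n μ τ < ε →
      ∀ α β : EReal, α ⊔ β = 0 → dHat n μ (maxPlusComb α β ν τ) < ε) := by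
  refine ⟨fun lam => dHat_maxPlusComb_zero_le hμ hν hτ, ?_⟩
  intro ε _ hν_lt hτ_lt α β hαβ
  rcases le_total α β with hle | hle
  · obtain rfl : β = 0 := by rwa [sup_eq_right.2 hle] at hαβ
    exact (dHat_maxPlusComb_zero_le hμ hν hτ hle).trans_lt (max_lt hν_lt hτ_lt)
  · obtain rfl : α = 0 := by rwa [sup_eq_left.2 hle] at hαβ
    rw [maxPlusComb_comm]
    exact (dHat_maxPlusComb_zero_le hμ hτ hν hle).trans_lt (max_lt hτ_lt hν_lt)

/-- For a compact metric space `(X, d)`, `n ≥ 1`, idempotent probability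
measures `μ, ν, τ` and `λ ∈ [−∞, 0]`, one has
`d̂ₙ(μ, (λ⊙ν) ⊕ τ) ≤ max(d̂ₙ(μ, ν), d̂ₙ(μ, τ))` (here `(λ⊙ν) ⊕ τ = λ⊙ν ⊕ 0⊙τ`).
Consequently every open `d̂ₙ`-ball in `I(X)` is max-plus convex. -/
theorem statement10 {X : Type*} [MetricSpace X] [CompactSpace X] (n : ℕ) (hn : 1 ≤ n)
    (μ ν τ : C(X, ℝ) → ℝ) (hμ : IsIdemMeasure μ) (hν : IsIdemMeasure ν)
    (hτ : IsIdemMeasure τ) :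
    (∀ lam : EReal, lam ≤ 0 →
      dHat n μ (maxPlusComb lam 0 ν τ) ≤ max (dHat n μ ν) (dHat n μ τ)) ∧
    (∀ ε : ℝ, 0 < ε → dHat n μ ν < ε → dHat n μ τ < ε →
      ∀ α β : EReal, α ⊔ β = 0 → dHat n μ (maxPlusComb α β ν τ) < ε) :=
  statement10_general n μ ν τ hμ hν hτ
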